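/- arXiv:1607.07979 — 2 statements merged into one kernel-verified Lean document; each statement's English description precedes it below -/
import Mathlib

section
/- Let R be a Noetherian ring, J an ideal of R with separated J-adic filtration (the intersection of all powers of J is zero), and I an ideal of R contained in J. Let A = R/I with the induced filtration by the images of the powers of J. Then the associated graded ring of A with respect to this induced filtration is isomorphic to the quotient of the associated graded ring gr_J(R) by the ideal In_J(I) of initial forms of elements of I; equivalently, there is a short exact sequence 0 → In_J(I) → gr_J(R) → gr(A) → 0. -/
/-!
The map `Jⁱ/J^{i+1} → J̃ᵢ/J̃_{i+1}` is induced by the surjection `R → R/I`, so it is onto. A class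
`y ∈ Jⁱ` dies iff `y ∈ J^{i+1} + I`, and by the modular law `(J^{i+1} + I) ∩ Jⁱ = J^{i+1} + I ∩ Jⁱ`,
whose image in `Jⁱ/J^{i+1}` consists of the degree-`i` initial forms of elements of `I`.
-/

namespace Ideal

variable {R S : Type*} [Ring R] [Ring S]

def subquotientMap (f : R →+* S) (K L : Ideal R) :
    ↥L ⧸ Submodule.comap L.subtype K →ₛₗ[f]
      ↥(L.map f) ⧸ Submodule.comap (L.map f).subtype (K.map f) :=
  Submodule.mapQ _ _ (f.toSemilinearMap.restrict fun _ hx => mem_map_of_mem f hx)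
    fun _ hx => mem_map_of_mem f hx

variable (f : R →+* S) {K L : Ideal R}

theorem subquotientMap_mk (y : ↥L) :
    subquotientMap f K L (Submodule.Quotient.mk y) =
      Submodule.Quotient.mk ⟨f y, mem_map_of_mem f y.2⟩ :=
  rfl

theorem subquotientMap_surjective (hf : Function.Surjective f) :
    Function.Surjective (subquotientMap f K L) := by
  intro x
  obtain ⟨⟨z, hz⟩, rfl⟩ := Submodule.Quotient.mk_surjective _ x
  obtain ⟨y, hy, rfl⟩ := (mem_map_iff_of_surjective f hf).1 hz
  exact ⟨Submodule.Quotient.mk ⟨y, hy⟩, rfl⟩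

theorem mem_ker_inf_sup_iff (hKL : K ≤ L) (hf : Function.Surjective f) {y : R} (hy : y ∈ L) :
    y ∈ RingHom.ker f ⊓ L ⊔ K ↔ f y ∈ K.map f := by
  rw [sup_comm, ← sup_inf_assoc_of_le _ hKL, mem_inf, ← mem_comap, comap_map_of_surjective' f hf]
  exact and_iff_left hy

theorem subquotientMap_mk_eq_zero_iff (hKL : K ≤ L) (hf : Function.Surjective f) (y : ↥L) :
    subquotientMap f K L (Submodule.Quotient.mk y) = 0 ↔ (y : R) ∈ RingHom.ker f ⊓ L ⊔ K := by
  rw [subquotientMap_mk, Submodule.Quotient.mk_eq_zero, mem_ker_inf_sup_iff f hKL hf y.2]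
  rfl

end Ideal

theorem gr_of_quotient_exact_sequence_general (R : Type*) [CommRing R]
    (I J : Ideal R) (i : ℕ) :
    ∃ φ : (↥(J ^ i) ⧸ (Submodule.comap (J ^ i).subtype (J ^ (i + 1)))) →+
        (↥(Ideal.map (Ideal.Quotient.mk I) (J ^ i)) ⧸
          (Submodule.comap (Ideal.map (Ideal.Quotient.mk I) (J ^ i)).subtype
            (Ideal.map (Ideal.Quotient.mk I) (J ^ (i + 1))))),
      Function.Surjective φ ∧
      (∀ y : ↥(J ^ i),
        φ (Submodule.Quotient.mk y) =
          Submodule.Quotient.mk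
            ⟨Ideal.Quotient.mk I (y : R), Ideal.mem_map_of_mem _ y.2⟩) ∧
      (∀ y : ↥(J ^ i),
        φ (Submodule.Quotient.mk y) = 0 ↔ (y : R) ∈ I ⊓ J ^ i ⊔ J ^ (i + 1)) := by
  have hle : J ^ (i + 1) ≤ J ^ i := Ideal.pow_le_pow_right i.le_succ
  refine ⟨(Ideal.subquotientMap (Ideal.Quotient.mk I) _ _).toAddMonoidHom,
    Ideal.subquotientMap_surjective _ Ideal.Quotient.mk_surjective,
    Ideal.subquotientMap_mk _, fun y => ?_⟩
  exact (Ideal.subquotientMap_mk_eq_zero_iff _ hle Ideal.Quotient.mk_surjective y).trans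
    (by rw [Ideal.mk_ker])

/-- Let `R` be a Noetherian ring, `J` an ideal of `R` whose powers form a
separated filtration (`⋂ᵢ Jⁱ = 0`), and `I ⊆ J` an ideal.  Let `A = R/I` with
the induced filtration `J̃ᵢ = (Jⁱ + I)/I = (image of Jⁱ in A)`.  Then
`gr(A) ≅ gr_J(R)/In_J(I)`; equivalently there is a short exact sequence
`0 → In_J(I) → gr_J(R) → gr(A) → 0`.  We state this degreewise: for every `i`,
the natural map `φᵢ` from the degree-`i` piece `Jⁱ/J^{i+1}` of `gr_J(R)` to the
degree-`i` piece `J̃ᵢ/J̃_{i+1}` of `gr(A)`, sending the class of `y ∈ Jⁱ` to the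
class of its image in `A`, is surjective with kernel exactly the degree-`i`
piece `(I ∩ Jⁱ + J^{i+1})/J^{i+1}` of the ideal of initial forms `In_J(I)`. -/
theorem gr_of_quotient_exact_sequence (R : Type*) [CommRing R] [IsNoetherianRing R]
    (I J : Ideal R) (hIJ : I ≤ J) (hsep : (⨅ i : ℕ, J ^ i) = ⊥) (i : ℕ) :
    ∃ φ : (↥(J ^ i) ⧸ (Submodule.comap (J ^ i).subtype (J ^ (i + 1)))) →+
        (↥(Ideal.map (Ideal.Quotient.mk I) (J ^ i)) ⧸
          (Submodule.comap (Ideal.map (Ideal.Quotient.mk I) (J ^ i)).subtype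
            (Ideal.map (Ideal.Quotient.mk I) (J ^ (i + 1))))),
      Function.Surjective φ ∧
      (∀ y : ↥(J ^ i),
        φ (Submodule.Quotient.mk y) =
          Submodule.Quotient.mk
            ⟨Ideal.Quotient.mk I (y : R), Ideal.mem_map_of_mem _ y.2⟩) ∧
      (∀ y : ↥(J ^ i),
        φ (Submodule.Quotient.mk y) = 0 ↔ (y : R) ∈ I ⊓ J ^ i ⊔ J ^ (i + 1)) :=
  gr_of_quotient_exact_sequence_general R I J i
end

section
/- Let O be a Noetherian local ring with maximal ideal m such that gr_m(O) ≅ k[T₁,…,Tₙ]/(F₁,…,F_c), where the F_i are homogeneous polynomials of degrees d_i forming a regular sequence in the polynomial ring (each F_i is a non-zerodivisor in k[T₁,…,Tₙ]/(F₁,…,F_{i−1})). Then the multiplicity of O equals the product of the degrees: e_m(O) = d₁·d₂···d_c. -/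
/-!
Multiplication by a homogeneous element `F` of degree `d` which is a nonzerodivisor on a graded
quotient `A ⧸ I` gives, in every degree `j`, an exact sequence
`0 → (A ⧸ I)_{j-d} → (A ⧸ I)_j → (A ⧸ (I + (F)))_j → 0`, so passing from `I` to `I + (F)`
multiplies the Hilbert series by `1 - X ^ d`. Along the regular sequence `F₁, …, F_c` this gives
`H_{k[T]/(F)} = ∏ (1 - X ^ dᵢ) · H_{k[T]}`, and the same recursion along `T₁, …, Tₙ`, whose
quotient is `k`, gives `H_{k[T]} · (1 - X) ^ n = 1`. Hence `H_{k[T]/(F)} · (1 - X) ^ (n - c)` is the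
polynomial `∏ (1 + X + ⋯ + X ^ (dᵢ - 1))`, whose value at `1` is `∏ dᵢ`; the Hilbert–Samuel
series of `O` is `H_{k[T]/(F)} / (1 - X)`. The same identity forces `c ≤ n`: otherwise
`H_{k[T]/(F)}` would be a polynomial vanishing at `1` with nonnegative coefficients and constant
term `1`.
-/

open Module PowerSeries

theorem Submodule.finrank_map_add_finrank_inf_ker {K V W : Type*} [DivisionRing K]
    [AddCommGroup V] [Module K V] [AddCommGroup W] [Module K W]
    (p : Submodule K V) [FiniteDimensional K p] (f : V →ₗ[K] W) :
    finrank K (p.map f) + finrank K (p ⊓ LinearMap.ker f : Submodule K V) = finrank K p := by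
  rw [← LinearMap.range_domRestrict, ← (f.domRestrict p).finrank_range_add_finrank_ker,
    LinearMap.ker_domRestrict, ← (comapSubtypeEquivOfLe (inf_le_left : p ⊓ _ ≤ p)).finrank_eq,
    comap_inf, comap_subtype_self, top_inf_eq]

theorem PowerSeries.one_sub_X_ne_zero {R : Type*} [Ring R] [Nontrivial R] :
    (1 - X : R⟦X⟧) ≠ 0 :=
  fun h ↦ by simpa using congrArg constantCoeff h

theorem PowerSeries.mk_sum_range_mul_one_sub_X {R : Type*} [Ring R] (f : ℕ → R) :
    (mk fun i ↦ ∑ j ∈ Finset.range (i + 1), f j) * (1 - X) = mk f := by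
  ext (_ | i) <;> simp [mul_sub, coeff_succ_mul_X, Finset.sum_range_succ]

section Polynomial

open scoped Polynomial

theorem Polynomial.prod_one_sub_X_pow {R ι : Type*} [CommRing R] (s : Finset ι) (d : ι → ℕ) :
    ∏ i ∈ s, (1 - Polynomial.X ^ d i : R[X]) =
      (∏ i ∈ s, ∑ t ∈ Finset.range (d i), Polynomial.X ^ t) * (1 - Polynomial.X) ^ s.card := by
  rw [← Finset.prod_const, ← Finset.prod_mul_distrib]
  exact Finset.prod_congr rfl fun i _ ↦ (geom_sum_mul_neg _ _).symm

theorem Polynomial.eval_one_pos_of_coeff_nonneg {p : ℤ[X]} (hp : ∀ j, 0 ≤ p.coeff j)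
    (h0 : 0 < p.coeff 0) : 0 < p.eval 1 := by
  rw [eval_eq_sum_range]
  exact Finset.sum_pos' (fun j _ ↦ by simpa using hp j) ⟨0, by simp, by simpa using h0⟩

end Polynomial

namespace Ideal

theorem ofList_ofFn {A : Type*} [CommSemiring A] {c : ℕ} (F : Fin c → A) :
    ofList (List.ofFn F) = span (Set.range F) := by
  simp only [ofList, List.mem_ofFn]
  rfl

variable {k A : Type*} [Field k] [CommRing A] [Algebra k A]

theorem ker_factorₐ_sup_span_singleton (I : Ideal A) (F : A) :
    LinearMap.ker (Quotient.factorₐ k (le_sup_left : I ≤ I ⊔ span {F})).toLinearMap =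
      LinearMap.range (LinearMap.mulLeft k (Quotient.mk I F)) := by
  ext x
  obtain ⟨p, rfl⟩ := Quotient.mk_surjective x
  simp only [LinearMap.mem_ker, AlgHom.toLinearMap_apply, Quotient.factorₐ_apply_mk,
    Quotient.eq_zero_iff_mem, Submodule.mem_sup, mem_span_singleton', LinearMap.mem_range,
    LinearMap.mulLeft_apply, Quotient.mk_surjective.exists, ← map_mul, Quotient.eq]
  constructor
  · rintro ⟨q, hq, _, ⟨r, rfl⟩, rfl⟩
    exact ⟨r, by simpa [mul_comm] using neg_mem hq⟩
  · rintro ⟨r, hr⟩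
    exact ⟨p - F * r, by simpa using neg_mem hr, r * F, ⟨r, rfl⟩, by ring⟩

variable (𝒜 : ℕ → Submodule k A)

def gradedPiece (I : Ideal A) (j : ℕ) : Submodule k (A ⧸ I) :=
  (𝒜 j).map (Quotient.mkₐ k I).toLinearMap

instance (I : Ideal A) (j : ℕ) [Module.Finite k (𝒜 j)] : Module.Finite k (I.gradedPiece 𝒜 j) :=
  Module.Finite.map _ _

noncomputable def hilbertSeries (I : Ideal A) : ℤ⟦X⟧ :=
  mk fun j ↦ (finrank k (I.gradedPiece 𝒜 j) : ℤ)

variable {𝒜} [GradedAlgebra 𝒜]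

theorem IsHomogeneous.sub_mul_decompose_mem {I : Ideal A} (hI : I.IsHomogeneous 𝒜)
    {F p r : A} {d j : ℕ} (hF : F ∈ 𝒜 d) (hp : p ∈ 𝒜 j) (h : p - F * r ∈ I) :
    p - (if d ≤ j then F * DirectSum.decompose 𝒜 r (j - d) else 0) ∈ I := by
  have := hI j h
  rw [DirectSum.decompose_sub, DirectSum.sub_apply, Submodule.coe_sub,
    DirectSum.decompose_of_mem_same 𝒜 hp] at this
  split_ifs with hd
  · rwa [DirectSum.coe_decompose_mul_of_left_mem_of_le 𝒜 hF hd] at this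
  · rwa [DirectSum.coe_decompose_mul_of_left_mem_of_not_le 𝒜 hF hd] at this

theorem gradedPiece_inf_range_mulLeft {I : Ideal A} (hI : I.IsHomogeneous 𝒜) {F : A} {d : ℕ}
    (hF : F ∈ 𝒜 d) (j : ℕ) :
    I.gradedPiece 𝒜 j ⊓ LinearMap.range (LinearMap.mulLeft k (Quotient.mk I F)) =
      if d ≤ j then (I.gradedPiece 𝒜 (j - d)).map (LinearMap.mulLeft k (Quotient.mk I F))
      else ⊥ := by
  apply le_antisymm
  · rintro _ ⟨⟨p, hp, rfl⟩, ⟨y, hy⟩⟩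
    obtain ⟨r, rfl⟩ := Quotient.mk_surjective y
    have hpr := hI.sub_mul_decompose_mem hF hp (Quotient.eq.mp hy.symm)
    split_ifs at hpr ⊢ with hd
    · refine ⟨Quotient.mk I (DirectSum.decompose 𝒜 r (j - d)), ⟨_, SetLike.coe_mem _, rfl⟩, ?_⟩
      simpa [← map_mul, Quotient.eq] using neg_mem hpr
    · simpa [Quotient.eq_zero_iff_mem] using hpr
  · split_ifs with hd
    · rintro _ ⟨_, ⟨q, hq, rfl⟩, rfl⟩
      refine ⟨⟨F * q, ?_, rfl⟩, ⟨_, rfl⟩⟩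
      simpa [hd] using SetLike.GradedMul.mul_mem hF hq
    · exact bot_le

theorem finrank_gradedPiece_sup_span_singleton_add [∀ j, Module.Finite k (𝒜 j)] {I : Ideal A}
    (hI : I.IsHomogeneous 𝒜) {F : A} {d : ℕ} (hF : F ∈ 𝒜 d) (hreg : IsSMulRegular (A ⧸ I) F)
    (j : ℕ) :
    finrank k ((I ⊔ span {F}).gradedPiece 𝒜 j) +
        (if d ≤ j then finrank k (I.gradedPiece 𝒜 (j - d)) else 0) =
      finrank k (I.gradedPiece 𝒜 j) := by
  let π := (Quotient.factorₐ k (le_sup_left : I ≤ I ⊔ span {F})).toLinearMap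
  have hmap : (I.gradedPiece 𝒜 j).map π = (I ⊔ span {F}).gradedPiece 𝒜 j := by
    rw [gradedPiece, ← Submodule.map_comp]
    rfl
  have hinj : Function.Injective (LinearMap.mulLeft k (Quotient.mk I F)) :=
    fun x y h ↦ hreg (by simpa [Algebra.smul_def] using h)
  rw [← (I.gradedPiece 𝒜 j).finrank_map_add_finrank_inf_ker π, hmap,
    ker_factorₐ_sup_span_singleton, gradedPiece_inf_range_mulLeft hI hF]
  by_cases hd : d ≤ j
  · rw [if_pos hd, if_pos hd, ← (Submodule.equivMapOfInjective _ hinj _).finrank_eq]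
  · rw [if_neg hd, if_neg hd, finrank_bot]

theorem hilbertSeries_sup_span_singleton [∀ j, Module.Finite k (𝒜 j)] {I : Ideal A}
    (hI : I.IsHomogeneous 𝒜) {F : A} {d : ℕ} (hF : F ∈ 𝒜 d) (hreg : IsSMulRegular (A ⧸ I) F) :
    (I ⊔ span {F}).hilbertSeries 𝒜 = (1 - X ^ d) * I.hilbertSeries 𝒜 := by
  ext j
  simp only [sub_mul, one_mul, map_sub, coeff_X_pow_mul', hilbertSeries, coeff_mk,
    ← finrank_gradedPiece_sup_span_singleton_add hI hF hreg j]
  split_ifs <;> simp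

theorem isHomogeneous_ofList_ofFn {c : ℕ} {F : Fin c → A} {d : Fin c → ℕ}
    (hF : ∀ i, F i ∈ 𝒜 (d i)) : (ofList (List.ofFn F)).IsHomogeneous 𝒜 := by
  rw [ofList_ofFn]
  exact homogeneous_span 𝒜 _ (Set.forall_mem_range.mpr fun i ↦ ⟨d i, hF i⟩)

open RingTheory.Sequence in
theorem hilbertSeries_ofList_ofFn [∀ j, Module.Finite k (𝒜 j)] {c : ℕ} {F : Fin c → A}
    {d : Fin c → ℕ} (hF : ∀ i, F i ∈ 𝒜 (d i)) (hreg : IsWeaklyRegular A (List.ofFn F)) :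
    (ofList (List.ofFn F)).hilbertSeries 𝒜 =
      (∏ i, (1 - X ^ d i)) * (⊥ : Ideal A).hilbertSeries 𝒜 := by
  induction c with
  | zero => simp
  | succ c ih =>
    rw [List.ofFn_succ', List.concat_eq_append] at hreg ⊢
    obtain ⟨hinit, hlast⟩ := (isWeaklyRegular_append_iff _ _ _).mp hreg
    rw [isWeaklyRegular_singleton_iff, smul_eq_mul, mul_top] at hlast
    rw [ofList_append, ofList_singleton,
      hilbertSeries_sup_span_singleton (isHomogeneous_ofList_ofFn fun i ↦ hF _) (hF _) hlast,
      ih (fun i ↦ hF _) hinit, Fin.prod_univ_castSucc]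
    ring

end Ideal

namespace MvPolynomial

attribute [local instance] gradedAlgebra

open Ideal RingTheory.Sequence

section CommRing

variable {σ R : Type*} [CommRing R]

theorem isSMulRegular_X_quotient_span_X_image {s : Set σ} {i : σ} (hi : i ∉ s) :
    IsSMulRegular (MvPolynomial σ R ⧸ span (X '' s : Set (MvPolynomial σ R)))
      (X i : MvPolynomial σ R) := by
  refine (isSMulRegular_quotient_iff_mem_of_smul_mem _ _).mpr fun p hp ↦ ?_
  rw [smul_eq_mul, mem_ideal_span_X_image] at hp
  rw [mem_ideal_span_X_image]
  intro m hm
  obtain ⟨u, hu, hne⟩ := hp (m + Finsupp.single i 1) (by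
    rw [support_X_mul, add_comm]
    exact Finset.mem_map_of_mem _ hm)
  have hui : u ≠ i := fun h ↦ hi (h ▸ hu)
  exact ⟨u, hu, by simpa [Finsupp.single_apply, hui.symm] using hne⟩

theorem isWeaklyRegular_ofFn_X {m : ℕ} {s : Fin m → σ} (hs : Function.Injective s) :
    IsWeaklyRegular (MvPolynomial σ R) (List.ofFn fun i ↦ (X (s i) : MvPolynomial σ R)) := by
  induction m with
  | zero => exact .nil _ _
  | succ m ih =>
    rw [List.ofFn_succ', List.concat_eq_append, isWeaklyRegular_append_iff,
      isWeaklyRegular_singleton_iff, smul_eq_mul, mul_top, ofList_ofFn, Set.range_comp' X]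
    refine ⟨ih (hs.comp (Fin.castSucc_injective m)), isSMulRegular_X_quotient_span_X_image ?_⟩
    rintro ⟨i, hi⟩
    exact Fin.castSucc_ne_last i (hs hi)

end CommRing

variable {σ k : Type*} [Field k]

instance [Finite σ] (j : ℕ) : Module.Finite k (homogeneousSubmodule σ k j) :=
  Module.Finite.iff_fg.mpr (homogeneousSubmodule_fg σ k j)

theorem finrank_gradedPiece_zero {I : Ideal (MvPolynomial σ k)} (hI : I ≠ ⊤) :
    finrank k (I.gradedPiece (homogeneousSubmodule σ k) 0) = 1 := by
  have : Nontrivial (MvPolynomial σ k ⧸ I) := Quotient.nontrivial_iff.mpr hI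
  rw [gradedPiece, homogeneousSubmodule_zero, Submodule.one_eq_span, Submodule.map_span,
    Set.image_singleton, AlgHom.toLinearMap_apply, map_one, finrank_span_singleton one_ne_zero]

theorem gradedPiece_idealOfVars {j : ℕ} (hj : j ≠ 0) :
    (idealOfVars σ k).gradedPiece (homogeneousSubmodule σ k) j = ⊥ := by
  rw [eq_bot_iff]
  rintro _ ⟨p, hp, rfl⟩
  have : p ∈ idealOfVars σ k ^ 1 := (mem_pow_idealOfVars_iff 1 p).mpr fun m hm ↦ by
    rw [Finsupp.degree_eq_weight_one]
    exact (hp (mem_support_iff.mp hm)).symm ▸ Nat.one_le_iff_ne_zero.mpr hj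
  simpa [Quotient.eq_zero_iff_mem] using this

theorem hilbertSeries_idealOfVars :
    (idealOfVars σ k).hilbertSeries (homogeneousSubmodule σ k) = 1 := by
  have hne : idealOfVars σ k ≠ ⊤ := (ne_top_iff_one _).mpr fun h ↦ by
    simpa using (C_mem_pow_idealOfVars_iff 1 (1 : k)).mp (by simpa using h)
  ext (_ | j)
  · simp [hilbertSeries, finrank_gradedPiece_zero hne]
  · rw [hilbertSeries, coeff_mk, gradedPiece_idealOfVars j.succ_ne_zero, finrank_bot]
    simp

variable [Fintype σ]

theorem hilbertSeries_bot_mul_one_sub_X_pow :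
    (⊥ : Ideal (MvPolynomial σ k)).hilbertSeries (homogeneousSubmodule σ k) *
      (1 - PowerSeries.X) ^ Fintype.card σ = 1 := by
  let e := (Fintype.equivFin σ).symm
  have := hilbertSeries_ofList_ofFn (𝒜 := homogeneousSubmodule σ k) (d := fun _ ↦ 1)
    (fun i ↦ isHomogeneous_X k (e i)) (isWeaklyRegular_ofFn_X e.injective)
  rw [ofList_ofFn, Set.range_comp' X, e.surjective.range_eq, Set.image_univ,
    hilbertSeries_idealOfVars, Finset.prod_const, Finset.card_univ, Fintype.card_fin,
    pow_one] at this
  rw [mul_comm, ← this]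

theorem hilbertSeries_span_mul_one_sub_X_pow {c : ℕ} {F : Fin c → MvPolynomial σ k}
    {d : Fin c → ℕ} (hF : ∀ i, (F i).IsHomogeneous (d i))
    (hreg : IsWeaklyRegular (MvPolynomial σ k) (List.ofFn F)) :
    (span (Set.range F)).hilbertSeries (homogeneousSubmodule σ k) *
        (1 - PowerSeries.X) ^ Fintype.card σ =
      ((∏ i, ∑ t ∈ Finset.range (d i), Polynomial.X ^ t : Polynomial ℤ) : PowerSeries ℤ) *
        (1 - PowerSeries.X) ^ c := by
  rw [← ofList_ofFn, hilbertSeries_ofList_ofFn hF hreg, mul_assoc,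
    hilbertSeries_bot_mul_one_sub_X_pow, mul_one]
  simpa using congrArg (Polynomial.coeToPowerSeries.ringHom (R := ℤ))
    (Polynomial.prod_one_sub_X_pow (R := ℤ) Finset.univ d)

theorem card_le_of_isRegular {c : ℕ} {F : Fin c → MvPolynomial σ k}
    {d : Fin c → ℕ} (hF : ∀ i, (F i).IsHomogeneous (d i))
    (hreg : IsRegular (MvPolynomial σ k) (List.ofFn F)) : c ≤ Fintype.card σ := by
  by_contra! hlt
  set I := span (Set.range F)
  set q : Polynomial ℤ := (∏ i, ∑ t ∈ Finset.range (d i), Polynomial.X ^ t) *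
    (1 - Polynomial.X) ^ (c - Fintype.card σ)
  have hIq : I.hilbertSeries (homogeneousSubmodule σ k) = q := by
    refine mul_right_cancel₀ (pow_ne_zero (Fintype.card σ) one_sub_X_ne_zero) ?_
    rw [hilbertSeries_span_mul_one_sub_X_pow hF hreg.toIsWeaklyRegular]
    push_cast [q]
    rw [mul_assoc, ← pow_add, Nat.sub_add_cancel hlt.le]
  have hcoeff (j : ℕ) : q.coeff j = finrank k (I.gradedPiece (homogeneousSubmodule σ k) j) := by
    rw [← Polynomial.coeff_coe, ← hIq, hilbertSeries, coeff_mk]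
  have hI : I ≠ ⊤ := by
    have := hreg.top_ne_smul
    rw [smul_eq_mul, mul_top, ofList_ofFn] at this
    exact this.symm
  have hpos := Polynomial.eval_one_pos_of_coeff_nonneg (p := q) (fun j ↦ by simp [hcoeff])
    (by simp [hcoeff, finrank_gradedPiece_zero hI])
  simp [q, Nat.sub_ne_zero_of_lt hlt] at hpos

end MvPolynomial

theorem multiplicity_of_complete_intersection_tangent_cone_general
    (O k : Type*) [CommRing O] [Field k] [Algebra k O]
    [IsLocalRing O]
    (n c : ℕ) (F : Fin c → MvPolynomial (Fin n) k) (dg : Fin c → ℕ)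
    (hhom : ∀ i, (F i).IsHomogeneous (dg i))
    (hreg : RingTheory.Sequence.IsRegular (MvPolynomial (Fin n) k) (List.ofFn F))
    (hgr : ∀ i : ℕ,
      Module.finrank k (O ⧸ (IsLocalRing.maximalIdeal O) ^ (i + 1)) =
        ∑ j ∈ Finset.range (i + 1),
          Module.finrank k
            (Submodule.map
              (Ideal.Quotient.mkₐ k (Ideal.span (Set.range F))).toLinearMap
              (MvPolynomial.homogeneousSubmodule (Fin n) k j))) :
    ∃ Q : Polynomial ℤ,
      (PowerSeries.mk fun i =>
          (Module.finrank k (O ⧸ (IsLocalRing.maximalIdeal O) ^ (i + 1)) : ℤ)) *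
          (1 - PowerSeries.X) ^ (n - c + 1) = (Q : PowerSeries ℤ) ∧
      Q.eval 1 = ∏ i, (dg i : ℤ) := by
  have hHS : (mk fun i ↦ (finrank k (O ⧸ (IsLocalRing.maximalIdeal O) ^ (i + 1)) : ℤ)) *
      (1 - X) =
      (Ideal.span (Set.range F)).hilbertSeries (MvPolynomial.homogeneousSubmodule (Fin n) k) := by
    simp_rw [hgr]
    push_cast
    exact mk_sum_range_mul_one_sub_X _
  have hcn : c ≤ n := by simpa using MvPolynomial.card_le_of_isRegular hhom hreg
  refine ⟨∏ i, ∑ t ∈ Finset.range (dg i), Polynomial.X ^ t, ?_, by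
    simp [Polynomial.eval_prod, Polynomial.eval_finsetSum]⟩
  refine mul_right_cancel₀ (pow_ne_zero c one_sub_X_ne_zero) ?_
  rw [← MvPolynomial.hilbertSeries_span_mul_one_sub_X_pow hhom hreg.toIsWeaklyRegular, ← hHS,
    Fintype.card_fin, mul_assoc, mul_assoc, ← pow_succ', ← pow_add,
    show n - c + 1 + c = n + 1 by omega]

/-- Let `O` be a Noetherian local ring with maximal ideal `m` and residue field
`k`, containing a field mapping isomorphically onto `k`, and suppose that the
associated graded ring `gr_m(O)` is isomorphic (as a graded `k`-algebra) to
`k[T₁,…,Tₙ]/(F₁,…,F_c)` with the `Fᵢ` homogeneous of degrees `dᵢ` forming a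
regular sequence; the isomorphism is recorded by the hypothesis `hgr`, which
says that `dim_k O/m^{i+1}` is the sum of the dimensions of the graded pieces of
the complete intersection in degrees `≤ i`.  Then the multiplicity of `O` equals
the product of the degrees:  writing the Hilbert–Samuel series
`Σ dim_k(O/m^{i+1})Tⁱ` as `Q(T)/(1−T)^{(n−c)+1}` (so that `e_m(O) = Q(1)`), one
has `e_m(O) = Q(1) = d₁⋯d_c`. -/
theorem multiplicity_of_complete_intersection_tangent_cone
    (O k : Type*) [CommRing O] [Field k] [Algebra k O]
    [IsNoetherianRing O] [IsLocalRing O]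
    (hres : Function.Bijective ((IsLocalRing.residue O).comp (algebraMap k O)))
    (n c : ℕ) (F : Fin c → MvPolynomial (Fin n) k) (dg : Fin c → ℕ)
    (hhom : ∀ i, (F i).IsHomogeneous (dg i))
    (hreg : RingTheory.Sequence.IsRegular (MvPolynomial (Fin n) k) (List.ofFn F))
    (hgr : ∀ i : ℕ,
      Module.finrank k (O ⧸ (IsLocalRing.maximalIdeal O) ^ (i + 1)) =
        ∑ j ∈ Finset.range (i + 1),
          Module.finrank k
            (Submodule.map
              (Ideal.Quotient.mkₐ k (Ideal.span (Set.range F))).toLinearMap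
              (MvPolynomial.homogeneousSubmodule (Fin n) k j))) :
    ∃ Q : Polynomial ℤ,
      (PowerSeries.mk fun i =>
          (Module.finrank k (O ⧸ (IsLocalRing.maximalIdeal O) ^ (i + 1)) : ℤ)) *
          (1 - PowerSeries.X) ^ (n - c + 1) = (Q : PowerSeries ℤ) ∧
      Q.eval 1 = ∏ i, (dg i : ℤ) :=
  multiplicity_of_complete_intersection_tangent_cone_general O k n c F dg hhom hreg hgr
end
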